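/- For every positive integer k, exactly half of all binary strings of length 3k-1 are k-omni; that is, P(3k-1, k, 2) = 1/2. -/

import Mathlib

/-!
Cut a binary word greedily into blocks `a…ab` with `b ≠ a`; the word is `k`-omni iff it has at
least `k` complete blocks. Reading off the first two letters, the number of words of length `m + k`
with fewer than `k` blocks satisfies the same Pascal recurrence as `2 ^ k * ∑ i < k, C(m, i)`, so
the two agree. For `m = 2k - 1` the binomial sum is half of `2 ^ (2k - 1)` by the symmetry
`C(2k - 1, i) = C(2k - 1, 2k - 1 - i)`.
-/

open Finset
open scoped Classical

def IsOmni {α : Type*} (k : ℕ) (L : List α) : Prop :=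
  ∀ T : List α, T.length = k → T.Sublist L

/-- The number of complete blocks `a^j b` (`j ≥ 1`, `b ≠ a`) in the greedy factorization of a
binary word; a repeated first letter is dropped without changing the current block. -/
def blockCount : List (Fin 2) → ℕ
  | [] => 0
  | [_] => 0
  | a :: b :: L => if a = b then blockCount (b :: L) else blockCount L + 1

theorem two_mul_blockCount_le_length (L : List (Fin 2)) : 2 * blockCount L ≤ L.length := by
  induction L using blockCount.induct with
  | case1 | case2 => simp [blockCount]
  | case3 b L ih => simp only [blockCount, if_true, List.length_cons] at ih ⊢; omega
  | case4 a b L hab ih => simp only [blockCount, if_neg hab, List.length_cons]; omega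

theorem isOmni_of_le_blockCount {L : List (Fin 2)} {k : ℕ} (hk : k ≤ blockCount L) :
    IsOmni k L := by
  induction L using blockCount.induct generalizing k with
  | case1 | case2 => simp_all [blockCount, IsOmni]
  | case3 b L ih =>
    rw [blockCount, if_pos rfl] at hk
    exact fun T hT => (ih hk T hT).cons b
  | case4 a b L hab ih =>
    rw [blockCount, if_neg hab] at hk
    rintro (_ | ⟨t, T⟩) hT
    · exact List.nil_sublist _
    have hT : T.Sublist L := ih (k := T.length) (by simp at hT; omega) T rfl
    obtain rfl | rfl : t = a ∨ t = b := by omega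
    · exact (hT.cons b).cons_cons t
    · exact (hT.cons_cons t).cons a

/-- The head condition is what lets the induction pass through a repeated first letter. -/
theorem exists_not_sublist_of_blockCount_lt {L : List (Fin 2)} {k : ℕ} (hk : blockCount L < k) :
    ∃ T : List (Fin 2), T.length = k ∧ ¬ T.Sublist L ∧ T.head? ≠ L.head? := by
  induction L using blockCount.induct generalizing k with
  | case1 =>
    refine ⟨List.replicate k 0, by simp, fun h => ?_, ?_⟩
    · have := h.length_le; simp [blockCount] at hk this; omega
    · simp [blockCount] at hk; cases k <;> simp_all
  | case2 a =>
    obtain ⟨k, rfl⟩ : ∃ j, k = j + 1 := ⟨k - 1, by simp [blockCount] at hk; omega⟩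
    refine ⟨List.replicate (k + 1) (a + 1), by simp, fun h => ?_, by simp [List.replicate_succ]⟩
    have := h.subset (List.mem_replicate.2 ⟨k.succ_ne_zero, rfl⟩)
    simp at this
  | case3 b L ih =>
    rw [blockCount, if_pos rfl] at hk
    obtain ⟨T, hlen, hT, hhead⟩ := ih hk
    refine ⟨T, hlen, fun h => ?_, hhead⟩
    rcases List.sublist_cons_iff.1 h with h | ⟨r, rfl, -⟩
    · exact hT h
    · exact hhead rfl
  | case4 a b L hab ih =>
    rw [blockCount, if_neg hab] at hk
    obtain ⟨k, rfl⟩ : ∃ j, k = j + 1 := ⟨k - 1, by omega⟩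
    obtain ⟨T, hlen, hT, -⟩ := ih (k := k) (by omega)
    refine ⟨(a + 1) :: T, by simp [hlen], fun h => hT ?_, by simp⟩
    rcases List.sublist_cons_iff.1 h with h | ⟨r, hr, -⟩
    · rcases List.sublist_cons_iff.1 h with h | ⟨r, hr, h⟩
      · exact (List.sublist_cons_self _ _).trans h
      · obtain ⟨-, rfl⟩ := List.cons_eq_cons.1 hr; exact h
    · simp at hr

theorem isOmni_iff_le_blockCount {L : List (Fin 2)} {k : ℕ} :
    IsOmni k L ↔ k ≤ blockCount L := by
  refine ⟨fun h => ?_, isOmni_of_le_blockCount⟩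
  by_contra! hlt
  obtain ⟨T, hlen, hT, -⟩ := exists_not_sublist_of_blockCount_lt hlt
  exact hT (h T hlen)

theorem card_filter_ofFn_succ {α : Type*} [Fintype α] (P : List α → Prop) [DecidablePred P]
    (n : ℕ) :
    #{S : Fin (n + 1) → α | P (List.ofFn S)} = ∑ a, #{S : Fin n → α | P (a :: List.ofFn S)} := by
  simp only [card_filter]
  rw [← (Fin.consEquiv fun _ => α).sum_comp, Fintype.sum_prod_type]
  simp [Fin.consEquiv, List.ofFn_succ]

theorem sum_range_choose_succ_succ (m k : ℕ) :
    ∑ i ∈ range (k + 1), (m + 1).choose i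
      = ∑ i ∈ range (k + 1), m.choose i + ∑ i ∈ range k, m.choose i := by
  induction k with
  | zero => simp
  | succ k ih =>
    rw [sum_range_succ, ih, sum_range_succ _ (k + 1), sum_range_succ _ k, Nat.choose_succ_succ']
    ring

def nonOmniCount (n k : ℕ) : ℕ := #{S : Fin n → Fin 2 | blockCount (List.ofFn S) < k}

theorem nonOmniCount_zero_right (n : ℕ) : nonOmniCount n 0 = 0 := by
  simp [nonOmniCount]

theorem nonOmniCount_succ_self (k : ℕ) : nonOmniCount (k + 1) (k + 1) = 2 ^ (k + 1) := by
  rw [nonOmniCount, filter_true_of_mem, card_univ, Fintype.card_fun, Fintype.card_fin,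
    Fintype.card_fin]
  intro S _
  have := two_mul_blockCount_le_length (List.ofFn S)
  rw [List.length_ofFn] at this
  omega

theorem nonOmniCount_add_two_succ (n k : ℕ) :
    nonOmniCount (n + 2) (k + 1) = nonOmniCount (n + 1) (k + 1) + 2 * nonOmniCount n k := by
  rw [nonOmniCount, card_filter_ofFn_succ (fun L => blockCount L < k + 1),
    sum_congr rfl fun a _ => card_filter_ofFn_succ (fun L => blockCount (a :: L) < k + 1) n,
    nonOmniCount, card_filter_ofFn_succ (fun L => blockCount L < k + 1)]
  simp only [blockCount, Order.lt_add_one_iff, Fin.sum_univ_two, Fin.isValue, ↓reduceIte,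
    zero_ne_one, Order.add_one_le_iff, one_ne_zero, nonOmniCount]
  ring

theorem nonOmniCount_add (m k : ℕ) :
    nonOmniCount (m + k) k = 2 ^ k * ∑ i ∈ range k, m.choose i := by
  induction k generalizing m with
  | zero => simp [nonOmniCount_zero_right]
  | succ k ihk =>
    induction m with
    | zero => simp [nonOmniCount_succ_self, sum_range_succ']
    | succ m ihm =>
      rw [show m + 1 + (k + 1) = m + k + 2 by ring, nonOmniCount_add_two_succ,
        show m + k + 1 = m + (k + 1) by ring, ihm, ihk, sum_range_choose_succ_succ]
      ring

theorem card_isOmni_add_nonOmniCount (n k : ℕ) :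
    #{S : Fin n → Fin 2 | IsOmni k (List.ofFn S)} + nonOmniCount n k = 2 ^ n := by
  simp only [nonOmniCount, isOmni_iff_le_blockCount, ← not_le]
  rw [card_filter_add_card_filter_not, card_univ, Fintype.card_fun, Fintype.card_fin,
    Fintype.card_fin]

theorem card_isOmni_three_mul_sub_one (k : ℕ) (hk : 1 ≤ k) :
    #{S : Fin (3 * k - 1) → Fin 2 | IsOmni k (List.ofFn S)} = 2 ^ (3 * k - 2) := by
  obtain ⟨j, rfl⟩ : ∃ j, k = j + 1 := ⟨k - 1, by omega⟩
  have hnon : nonOmniCount (3 * (j + 1) - 1) (j + 1) = 2 ^ (3 * (j + 1) - 2) := by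
    rw [show 3 * (j + 1) - 1 = (2 * j + 1) + (j + 1) by omega, nonOmniCount_add,
      Nat.sum_range_choose_halfway, show (4 : ℕ) = 2 ^ 2 by rfl, ← pow_mul, ← pow_add]
    congr 1
    omega
  have hpow : 2 ^ (3 * (j + 1) - 1) = 2 ^ (3 * (j + 1) - 2) * 2 := by
    rw [← pow_succ, show 3 * (j + 1) - 2 + 1 = 3 * (j + 1) - 1 by omega]
  have hsplit := card_isOmni_add_nonOmniCount (3 * (j + 1) - 1) (j + 1)
  omega

/-- Exactly half of all binary strings of length `3k-1` are `k`-omni. -/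
theorem stmt_7 (k : ℕ) (hk : 1 ≤ k) :
    ((Finset.univ.filter (fun S : Fin (3 * k - 1) → Fin 2 =>
        ∀ T : List (Fin 2), T.length = k → T.Sublist (List.ofFn S))).card : ℝ)
        / 2 ^ (3 * k - 1)
      = 1 / 2 := by
  have h := card_isOmni_three_mul_sub_one k hk
  unfold IsOmni at h
  rw [h, show 3 * k - 1 = 3 * k - 2 + 1 by omega, pow_succ]
  push_cast
  field_simp
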